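/- Let (X, d_X) and (Y, d_Y) be finite metric spaces, let f : X → Y be an injective nonexpansive map, let δ ≥ 0, and let k ≥ 1 be an integer. Then every maximal k-edge-connected subset of X (with respect to the δ-threshold graph of X) is contained in f⁻¹(B) for some maximal k-edge-connected subset B of Y (with respect to the δ-threshold graph of Y); that is, EL^k_δ(X) refines f⁻¹(EL^k_δ(Y)), so EL^k_δ is functorial for injective nonexpansive maps. -/

import Mathlib

/-!
An injective nonexpansive map `f` is a graph homomorphism between the `δ`-threshold graphs
which is bijective from any `A` onto `f '' A`. Deleting fewer than `k` edges of `G[f '' A]`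
amounts to deleting at most as many edges of `G[A]`, so `f '' A` inherits `k`-edge-connectivity
from `A`; in the finite space `Y` it then lies in a maximal `k`-edge-connected set `B`.
-/

/-- A nonexpansive map between metric spaces. -/
def Nonexpansive {X Y : Type*} [MetricSpace X] [MetricSpace Y] (f : X → Y) : Prop :=
  ∀ x x' : X, dist (f x) (f x') ≤ dist x x'

/-- The `δ`-threshold graph of a metric space: distinct points are adjacent
iff their distance is at most `δ`. -/
def thresholdGraph (X : Type*) [MetricSpace X] (δ : ℝ) : SimpleGraph X where
  Adj x y := x ≠ y ∧ dist x y ≤ δ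
  symm := ⟨fun x y h => ⟨h.1.symm, by rw [dist_comm]; exact h.2⟩⟩
  loopless := ⟨fun x h => h.1 rfl⟩

/-- `A` is `k`-edge-connected w.r.t. `G`: the induced subgraph `G[A]` is connected,
and remains connected after deleting any set of fewer than `k` of its edges. -/
def IsKEdgeConnected {X : Type*} (G : SimpleGraph X) (k : ℕ) (A : Set X) : Prop :=
  (G.induce A).Connected ∧
    ∀ F : Set (Sym2 A), F ⊆ (G.induce A).edgeSet → F.ncard < k →
      ((G.induce A).deleteEdges F).Connected

/-- A maximal `k`-edge-connected subset. -/
def IsMaxKEdgeConnected {X : Type*} (G : SimpleGraph X) (k : ℕ) (A : Set X) : Prop :=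
  IsKEdgeConnected G k A ∧
    ∀ B : Set X, IsKEdgeConnected G k B → A ⊆ B → A = B

namespace SimpleGraph

variable {V W : Type*} {G : SimpleGraph V} {H : SimpleGraph W}

def Hom.deleteEdgesPreimage (φ : G →g H) (F : Set (Sym2 W)) :
    G.deleteEdges (G.edgeSet ∩ Sym2.map φ ⁻¹' F) →g H.deleteEdges F where
  toFun := φ
  map_rel' {a b} hab := by
    rw [deleteEdges_adj] at hab ⊢
    exact ⟨φ.map_adj hab.1, fun hF => hab.2 ⟨hab.1, hF⟩⟩

theorem connected_deleteEdges_of_bijective [Finite W] (φ : G →g H) (hφ : Function.Bijective φ)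
    {k : ℕ} (hG : ∀ F ⊆ G.edgeSet, F.ncard < k → (G.deleteEdges F).Connected)
    (F : Set (Sym2 W)) (hF : F.ncard < k) : (H.deleteEdges F).Connected := by
  have hcard : (G.edgeSet ∩ Sym2.map φ ⁻¹' F).ncard ≤ F.ncard :=
    Set.ncard_le_ncard_of_injOn _ (fun _ he => he.2) (Sym2.map.injective hφ.1).injOn
  exact (hG _ Set.inter_subset_left (hcard.trans_lt hF)).map (φ.deleteEdgesPreimage F) hφ.2

end SimpleGraph

theorem IsKEdgeConnected.image {V W : Type*} [Finite W] {G : SimpleGraph V}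
    {H : SimpleGraph W} (φ : G →g H) (hφ : Function.Injective φ) {k : ℕ}
    {A : Set V} (hA : IsKEdgeConnected G k A) : IsKEdgeConnected H k (φ '' A) := by
  let ψ := SimpleGraph.induceHom φ (Set.mapsTo_image φ A)
  have hψ : Function.Bijective ψ :=
    ⟨SimpleGraph.induceHom_injective φ _ hφ.injOn, by simp [ψ, Set.surjOn_image]⟩
  exact ⟨hA.1.map ψ hψ.2,
    fun F _ hF => SimpleGraph.connected_deleteEdges_of_bijective ψ hψ hA.2 F hF⟩

theorem IsKEdgeConnected.exists_isMaxKEdgeConnected_superset {V : Type*} [Finite V]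
    {G : SimpleGraph V} {k : ℕ} {A : Set V}
    (hA : IsKEdgeConnected G k A) : ∃ B, IsMaxKEdgeConnected G k B ∧ A ⊆ B := by
  obtain ⟨B, hAB, hB⟩ := Finite.exists_le_maximal hA
  exact ⟨B, ⟨hB.prop, fun C hC hBC => hB.eq_of_le hC hBC⟩, hAB⟩

def Nonexpansive.thresholdGraphHom {X Y : Type*} [MetricSpace X] [MetricSpace Y] {f : X → Y}
    (hf : Nonexpansive f) (hinj : Function.Injective f) (δ : ℝ) :
    thresholdGraph X δ →g thresholdGraph Y δ where
  toFun := f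
  map_rel' hxy := ⟨hinj.ne hxy.1, (hf _ _).trans hxy.2⟩

theorem EL_functorial_inj_general {X Y : Type*}
    [MetricSpace X]
    [MetricSpace Y] [Fintype Y]
    (f : X → Y) (hinj : Function.Injective f) (hf : Nonexpansive f)
    (δ : ℝ) (k : ℕ) :
    ∀ A : Set X, IsMaxKEdgeConnected (thresholdGraph X δ) k A →
      ∃ B : Set Y, IsMaxKEdgeConnected (thresholdGraph Y δ) k B ∧ A ⊆ f ⁻¹' B := by
  intro A hA
  have himage : IsKEdgeConnected (thresholdGraph Y δ) k (f '' A) :=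
    hA.1.image (hf.thresholdGraphHom hinj δ) hinj
  obtain ⟨B, hB, hAB⟩ := himage.exists_isMaxKEdgeConnected_superset
  exact ⟨B, hB, Set.image_subset_iff.mp hAB⟩

/-- `EL^k_δ` is functorial for injective nonexpansive maps: every maximal
`k`-edge-connected subset of `X` (w.r.t. the `δ`-threshold graph) is contained in
`f⁻¹(B)` for some maximal `k`-edge-connected subset `B` of `Y`. -/
theorem EL_functorial_inj {X Y : Type*}
    [MetricSpace X] [Fintype X] [Nonempty X]
    [MetricSpace Y] [Fintype Y] [Nonempty Y]
    (f : X → Y) (hinj : Function.Injective f) (hf : Nonexpansive f)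
    (δ : ℝ) (hδ : 0 ≤ δ) (k : ℕ) (hk : 1 ≤ k) :
    ∀ A : Set X, IsMaxKEdgeConnected (thresholdGraph X δ) k A →
      ∃ B : Set Y, IsMaxKEdgeConnected (thresholdGraph Y δ) k B ∧ A ⊆ f ⁻¹' B :=
  EL_functorial_inj_general f hinj hf δ k
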